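/- arXiv:1104.4561 — 3 statements merged into one kernel-verified Lean document; each statement's English description precedes it below -/
import Mathlib

section
/- Let $(A_n)$ be a sequence of linear automorphisms of a finite dimensional complex normed vector space $E$ such that for every $\theta>1$ there exist $C(\theta)>0$ and $0<\alpha(\theta)<1$ with $\|A_{n+\ell,n}^{-1}\| \le C(\theta)\,\theta^n\,\alpha(\theta)^\ell$ for all $n,\ell\in\mathbb{N}$. Then for every subexponential sequence $(b_n)\subset E$, the equation $u_{n+1} = A_n u_n + b_n$ has a unique subexponential solution $(u_n)\subset E$. -/
/-- A sequence in a normed space is subexponential if for every `θ > 1` it is `O(θ^n)`. -/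
def Subexp {E : Type*} [Norm E] (u : ℕ → E) : Prop :=
  ∀ θ : ℝ, 1 < θ → ∃ B : ℝ, 0 < B ∧ ∀ n : ℕ, ‖u n‖ ≤ B * θ ^ n

/-- `transE A m ℓ` is the composition `A_{m+ℓ-1} ∘ ⋯ ∘ A_m`, i.e. `A_{m+ℓ, m}`. -/
def transE {E : Type*} [NormedAddCommGroup E] [NormedSpace ℂ E]
    (A : ℕ → E ≃L[ℂ] E) (m : ℕ) : ℕ → (E ≃L[ℂ] E)
  | 0 => ContinuousLinearEquiv.refl ℂ E
  | (ℓ + 1) => (transE A m ℓ).trans (A (m + ℓ))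

/-!
The solution is given by the backward series `u_n = -∑_{ℓ ≥ 0} A_{n+ℓ+1,n}⁻¹ b_{n+ℓ}`.
Against a subexponential sequence, the bound `‖A_{n+ℓ,n}⁻¹‖ ≤ C θ^n α^ℓ` gives terms of size
`O(θ^n r^ℓ)` with `r < 1` (choose the growth rate of the sequence below both `√θ` and `α⁻¹`),
so the series converges to a subexponential sequence solving the recursion. The difference `w` of
two subexponential solutions satisfies `w_n = A_{n+ℓ,n}⁻¹ w_{n+ℓ} = O(θ^n r^ℓ)` for every `ℓ`,
hence vanishes.
-/

open Filter Topology

section Subexp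

variable {E : Type*} [SeminormedAddCommGroup E] {u v : ℕ → E}

lemma Subexp.neg (hu : Subexp u) : Subexp (-u) := by
  simpa only [Subexp, Pi.neg_apply, norm_neg] using hu

lemma Subexp.sub (hu : Subexp u) (hv : Subexp v) : Subexp (u - v) := by
  intro θ hθ
  obtain ⟨B, hB, hBu⟩ := hu θ hθ
  obtain ⟨B', hB', hBv⟩ := hv θ hθ
  refine ⟨B + B', by positivity, fun n => ?_⟩
  calc ‖(u - v) n‖ ≤ ‖u n‖ + ‖v n‖ := norm_sub_le _ _
    _ ≤ B * θ ^ n + B' * θ ^ n := add_le_add (hBu n) (hBv n)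
    _ = (B + B') * θ ^ n := by ring

end Subexp

lemma exists_one_lt_le_mul_lt_one {α θ : ℝ} (hα₀ : 0 < α) (hα₁ : α < 1) (hθ : 1 < θ) :
    ∃ θ', 1 < θ' ∧ θ' ≤ θ ∧ α * θ' < 1 := by
  obtain ⟨θ', hθ', hlt⟩ := exists_between (lt_min hθ ((one_lt_inv₀ hα₀).2 hα₁))
  refine ⟨θ', hθ', (hlt.trans_le (min_le_left _ _)).le, ?_⟩
  calc α * θ' < α * α⁻¹ := by gcongr; exact hlt.trans_le (min_le_right _ _)
    _ = 1 := mul_inv_cancel₀ hα₀.ne'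

def NonuniformlyContracting {𝕜 E F : Type*} [NontriviallyNormedField 𝕜]
    [SeminormedAddCommGroup E] [NormedSpace 𝕜 E] [SeminormedAddCommGroup F] [NormedSpace 𝕜 F]
    (T : ℕ → ℕ → E →L[𝕜] F) : Prop :=
  ∀ θ : ℝ, 1 < θ → ∃ C : ℝ, 0 < C ∧ ∃ α : ℝ, 0 < α ∧ α < 1 ∧
    ∀ n ℓ : ℕ, ‖T n ℓ‖ ≤ C * θ ^ n * α ^ ℓ

namespace NonuniformlyContracting

variable {𝕜 E F : Type*} [NontriviallyNormedField 𝕜]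
  [NormedAddCommGroup E] [NormedSpace 𝕜 E] [NormedAddCommGroup F] [NormedSpace 𝕜 F]
  {T : ℕ → ℕ → E →L[𝕜] F}

lemma shift (hT : NonuniformlyContracting T) : NonuniformlyContracting fun n ℓ => T n (ℓ + 1) := by
  intro θ hθ
  obtain ⟨C, hC, α, hα₀, hα₁, hTC⟩ := hT θ hθ
  exact ⟨C * α, by positivity, α, hα₀, hα₁, fun n ℓ => (hTC n (ℓ + 1)).trans_eq (by ring)⟩

lemma exists_norm_apply_le (hT : NonuniformlyContracting T) {x : ℕ → E} (hx : Subexp x)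
    {θ : ℝ} (hθ : 1 < θ) :
    ∃ K, 0 < K ∧ ∃ r, 0 ≤ r ∧ r < 1 ∧ ∀ n ℓ, ‖T n ℓ (x (n + ℓ))‖ ≤ K * θ ^ n * r ^ ℓ := by
  have hθ₁ : 1 < √θ := by rwa [Real.lt_sqrt zero_le_one, one_pow]
  obtain ⟨C, hC, α, hα₀, hα₁, hTC⟩ := hT (√θ) hθ₁
  obtain ⟨θ₂, hθ₂, hθ₂θ, hαθ₂⟩ := exists_one_lt_le_mul_lt_one hα₀ hα₁ hθ₁
  obtain ⟨B, hB, hxB⟩ := hx θ₂ hθ₂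
  refine ⟨C * B, by positivity, α * θ₂, by positivity, hαθ₂, fun n ℓ => ?_⟩
  have hθθ₂ : √θ * θ₂ ≤ θ :=
    calc √θ * θ₂ ≤ √θ * √θ := by gcongr
      _ = θ := Real.mul_self_sqrt (by positivity)
  calc ‖T n ℓ (x (n + ℓ))‖ ≤ ‖T n ℓ‖ * ‖x (n + ℓ)‖ := (T n ℓ).le_opNorm _
    _ ≤ (C * √θ ^ n * α ^ ℓ) * (B * θ₂ ^ (n + ℓ)) :=
        mul_le_mul (hTC n ℓ) (hxB _) (norm_nonneg _) (by positivity)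
    _ = C * B * (√θ * θ₂) ^ n * (α * θ₂) ^ ℓ := by ring
    _ ≤ C * B * θ ^ n * (α * θ₂) ^ ℓ := by gcongr

lemma summable [CompleteSpace F] (hT : NonuniformlyContracting T) {x : ℕ → E} (hx : Subexp x)
    (n : ℕ) : Summable fun ℓ => T n ℓ (x (n + ℓ)) := by
  obtain ⟨K, -, r, hr₀, hr₁, hK⟩ := hT.exists_norm_apply_le hx one_lt_two
  exact .of_norm_bounded ((summable_geometric_of_lt_one hr₀ hr₁).mul_left _) (hK n)

lemma subexp_tsum (hT : NonuniformlyContracting T) {x : ℕ → E} (hx : Subexp x) :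
    Subexp fun n => ∑' ℓ, T n ℓ (x (n + ℓ)) := by
  intro θ hθ
  obtain ⟨K, hK, r, hr₀, hr₁, hKr⟩ := hT.exists_norm_apply_le hx hθ
  have hr : 0 < 1 - r := sub_pos.2 hr₁
  refine ⟨K * (1 - r)⁻¹, by positivity, fun n => ?_⟩
  calc ‖∑' ℓ, T n ℓ (x (n + ℓ))‖ ≤ K * θ ^ n * (1 - r)⁻¹ :=
        tsum_of_norm_bounded ((hasSum_geometric_of_lt_one hr₀ hr₁).mul_left _) (hKr n)
    _ = K * (1 - r)⁻¹ * θ ^ n := by ring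

lemma eq_zero_of_forall_eq_apply {S : ℕ → ℕ → E →L[𝕜] E} (hS : NonuniformlyContracting S)
    {w : ℕ → E} (hw : Subexp w) (h : ∀ n ℓ, S n ℓ (w (n + ℓ)) = w n) : w = 0 := by
  funext n
  obtain ⟨K, -, r, hr₀, hr₁, hK⟩ := hS.exists_norm_apply_le hw one_lt_two
  have hlim : Tendsto (fun ℓ => K * 2 ^ n * r ^ ℓ) atTop (𝓝 0) := by
    simpa using (tendsto_pow_atTop_nhds_zero_of_lt_one hr₀ hr₁).const_mul (K * 2 ^ n)
  have hle : ‖w n‖ ≤ 0 := ge_of_tendsto' hlim fun ℓ => h n ℓ ▸ hK n ℓ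
  exact norm_le_zero_iff.1 hle

end NonuniformlyContracting

section Recurrence

variable {E : Type*} [NormedAddCommGroup E] [NormedSpace ℂ E] {A : ℕ → E ≃L[ℂ] E}

lemma transE_succ_apply (n ℓ : ℕ) (x : E) :
    transE A n (ℓ + 1) x = transE A (n + 1) ℓ (A n x) := by
  induction ℓ generalizing x with
  | zero => rfl
  | succ k ih =>
    change A (n + (k + 1)) (transE A n (k + 1) x) = A (n + 1 + k) (transE A (n + 1) k (A n x))
    rw [ih, add_right_comm, add_assoc]

lemma apply_transE_succ_symm_apply (n ℓ : ℕ) (y : E) :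
    A n ((transE A n (ℓ + 1)).symm y) = (transE A (n + 1) ℓ).symm y := by
  rw [ContinuousLinearEquiv.eq_symm_apply, ← transE_succ_apply,
    ContinuousLinearEquiv.apply_symm_apply]

lemma transE_apply_of_recurrence {w : ℕ → E} (hw : ∀ n, w (n + 1) = A n (w n)) (n ℓ : ℕ) :
    transE A n ℓ (w n) = w (n + ℓ) := by
  induction ℓ with
  | zero => rfl
  | succ k ih => exact (congrArg (A (n + k)) ih).trans (hw (n + k)).symm

lemma eq_of_subexp_of_recurrence
    (hA : NonuniformlyContracting fun n ℓ => ((transE A n ℓ).symm : E →L[ℂ] E))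
    {b u v : ℕ → E} (hu : Subexp u) (hv : Subexp v)
    (hu' : ∀ n, u (n + 1) = A n (u n) + b n) (hv' : ∀ n, v (n + 1) = A n (v n) + b n) :
    u = v := by
  have hw : ∀ n, (u - v) (n + 1) = A n ((u - v) n) := fun n => by
    simp only [Pi.sub_apply, hu', hv', map_sub]
    abel
  refine sub_eq_zero.1 (hA.eq_zero_of_forall_eq_apply (hu.sub hv) fun n ℓ => ?_)
  rw [← transE_apply_of_recurrence hw n ℓ]
  exact (transE A n ℓ).symm_apply_apply _

end Recurrence

section Solution

variable {E : Type*} [NormedAddCommGroup E] [NormedSpace ℂ E]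

noncomputable def backwardSolution (A : ℕ → E ≃L[ℂ] E) (b : ℕ → E) (n : ℕ) : E :=
  -∑' ℓ, (transE A n (ℓ + 1)).symm (b (n + ℓ))

variable {A : ℕ → E ≃L[ℂ] E}
  (hA : NonuniformlyContracting fun n ℓ => ((transE A n ℓ).symm : E →L[ℂ] E))
  {b : ℕ → E} (hb : Subexp b)
include hA hb

lemma subexp_backwardSolution : Subexp (backwardSolution A b) :=
  (hA.shift.subexp_tsum hb).neg

lemma backwardSolution_succ [CompleteSpace E] (n : ℕ) :
    backwardSolution A b (n + 1) = A n (backwardSolution A b n) + b n := by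
  have hsum : Summable fun ℓ => (transE A (n + 1) (ℓ + 1)).symm (b (n + (ℓ + 1))) := by
    simpa only [add_right_comm n 1, add_assoc, ContinuousLinearEquiv.coe_coe]
      using hA.shift.summable hb (n + 1)
  have hmap : A n (∑' ℓ, (transE A n (ℓ + 1)).symm (b (n + ℓ))) =
      b n + ∑' ℓ, (transE A (n + 1) (ℓ + 1)).symm (b (n + 1 + ℓ)) := by
    rw [ContinuousLinearEquiv.map_tsum]
    simp_rw [apply_transE_succ_symm_apply]
    rw [tsum_eq_zero_add' (f := fun ℓ => (transE A (n + 1) ℓ).symm (b (n + ℓ))) hsum]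
    congr 1
    exact tsum_congr fun ℓ => by rw [add_right_comm, add_assoc]
  simp only [backwardSolution, map_neg, hmap]
  abel

end Solution

theorem stmt1 {E : Type*} [NormedAddCommGroup E] [NormedSpace ℂ E] [FiniteDimensional ℂ E]
    (A : ℕ → E ≃L[ℂ] E)
    (hA : ∀ θ : ℝ, 1 < θ → ∃ C : ℝ, 0 < C ∧ ∃ α : ℝ, 0 < α ∧ α < 1 ∧
      ∀ n ℓ : ℕ, ‖((transE A n ℓ).symm : E →L[ℂ] E)‖ ≤ C * θ ^ n * α ^ ℓ)
    (b : ℕ → E) (hb : Subexp b) :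
    ∃! u : ℕ → E, Subexp u ∧ ∀ n : ℕ, u (n + 1) = A n (u n) + b n := by
  refine ⟨backwardSolution A b, ⟨subexp_backwardSolution hA hb, backwardSolution_succ hA hb⟩,
    fun v ⟨hv, hv'⟩ => ?_⟩
  exact eq_of_subexp_of_recurrence hA hv (subexp_backwardSolution hA hb) hv'
    (backwardSolution_succ hA hb)
end

section
/- Define the sequence of affine maps $f_n\colon\mathbb{C}\to\mathbb{C}$ by $f_n(u) = \tfrac12 u$ if $n=0$ or $(2k)! \le n < (2k+1)!$ for some $k\in\mathbb{N}$, and $f_n(u) = 2u - 1$ if $(2k+1)! \le n < (2k+2)!$ for some $k\in\mathbb{N}$. Then no solution $(u_n)$ of $u_{n+1} = f_n(u_n)$ is subexponential; in fact, for every solution, $|u_n| \ge 2^{n+o(n)}$ along a subsequence, so $(u_n)$ is not $O(\alpha^n)$ for any $\alpha < 2$. -/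
open scoped Classical in
/-- The affine maps of the counterexample. -/
noncomputable def f4 (n : ℕ) (u : ℂ) : ℂ :=
  if n = 0 ∨ ∃ k : ℕ, (2 * k).factorial ≤ n ∧ n < (2 * k + 1).factorial then
    u / 2
  else
    2 * u - 1

/-!
On the blocks `[(2k)!, (2k+1)!)` the maps halve, on the blocks `[(2k+1)!, (2k+2)!)` they double
about the fixed point `1`. At the time `(2k+1)!` the solution is either far from `0` or far
from `1`. In the first case undoing the halving block shows that `u (2k)!` is of size
`2^(2k·(2k)!)`; in the second the doubling block makes `u (2k+2)! - 1` of size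
`2^((2k+1)·(2k+1)!)`, which is `2^(n - n/(2k+2))` for `n = (2k+2)!`. Either way `‖u n‖` beats
`γ^n` for any fixed `γ < 2` along a subsequence.
-/

open Filter Topology Nat

lemma eq_div_two_pow_of_halving {u : ℕ → ℂ} {a m : ℕ}
    (h : ∀ n, a ≤ n → n < a + m → u (n + 1) = u n / 2) : u (a + m) = u a / 2 ^ m := by
  induction m with
  | zero => simp
  | succ m ih =>
    rw [← add_assoc, h _ (Nat.le_add_right a m) (by omega),
      ih fun n h₁ h₂ => h n h₁ (by omega), pow_succ, div_div]

lemma sub_one_eq_two_pow_mul_of_doubling {u : ℕ → ℂ} {a m : ℕ}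
    (h : ∀ n, a ≤ n → n < a + m → u (n + 1) = 2 * u n - 1) :
    u (a + m) - 1 = 2 ^ m * (u a - 1) := by
  induction m with
  | zero => simp
  | succ m ih =>
    rw [← add_assoc, h _ (Nat.le_add_right a m) (by omega), pow_succ]
    linear_combination 2 * ih fun n h₁ h₂ => h n h₁ (by omega)

lemma f4_eq_div_two {n k : ℕ} (h₁ : (2 * k)! ≤ n) (h₂ : n < (2 * k + 1)!) (x : ℂ) :
    f4 n x = x / 2 :=
  if_pos (Or.inr ⟨k, h₁, h₂⟩)

lemma f4_eq_two_mul_sub_one {n k : ℕ} (h₁ : (2 * k + 1)! ≤ n) (h₂ : n < (2 * k + 2)!) (x : ℂ) :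
    f4 n x = 2 * x - 1 := by
  refine if_neg ?_
  rintro (rfl | ⟨j, hj₁, hj₂⟩)
  · exact (factorial_pos _).not_ge h₁
  · rcases le_or_gt j k with hjk | hjk
    · exact (factorial_le (by omega : 2 * j + 1 ≤ 2 * k + 1)).trans h₁ |>.not_gt hj₂
    · exact (factorial_le (by omega : 2 * k + 2 ≤ 2 * j)).trans hj₁ |>.not_gt h₂

lemma f4_solution_factorial_odd {u : ℕ → ℂ} (hu : ∀ n, u (n + 1) = f4 n (u n)) (k : ℕ) :
    u (2 * k + 1)! = u (2 * k)! / 2 ^ (2 * k * (2 * k)!) := by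
  have hsplit : (2 * k + 1)! = (2 * k)! + 2 * k * (2 * k)! := by rw [factorial_succ]; ring
  rw [hsplit]
  exact eq_div_two_pow_of_halving fun n h₁ h₂ =>
    (hu n).trans (f4_eq_div_two h₁ (hsplit ▸ h₂) _)

lemma f4_solution_factorial_even_sub_one {u : ℕ → ℂ} (hu : ∀ n, u (n + 1) = f4 n (u n))
    (k : ℕ) :
    u (2 * k + 2)! - 1 = 2 ^ ((2 * k + 1) * (2 * k + 1)!) * (u (2 * k + 1)! - 1) := by
  have hsplit : (2 * k + 2)! = (2 * k + 1)! + (2 * k + 1) * (2 * k + 1)! := by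
    rw [show (2 * k + 2)! = (2 * k + 2) * (2 * k + 1)! from factorial_succ _]; ring
  rw [hsplit]
  exact sub_one_eq_two_pow_mul_of_doubling fun n h₁ h₂ =>
    (hu n).trans (f4_eq_two_mul_sub_one h₁ (hsplit ▸ h₂) _)

lemma f4_solution_dichotomy {u : ℕ → ℂ} (hu : ∀ n, u (n + 1) = f4 n (u n)) (k : ℕ) :
    (2 : ℝ) ^ (2 * k * (2 * k)!) ≤ 2 * ‖u (2 * k)!‖ ∨
      (2 : ℝ) ^ ((2 * k + 1) * (2 * k + 1)!) ≤ 2 * ‖u (2 * k + 2)! - 1‖ := by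
  set x := u (2 * k + 1)!
  rcases lt_or_ge (1 / 2) ‖x‖ with hx | hx
  · left
    have hnorm : ‖u (2 * k)!‖ = ‖x‖ * 2 ^ (2 * k * (2 * k)!) := by
      have h := f4_solution_factorial_odd hu k
      rw [eq_div_iff (pow_ne_zero _ two_ne_zero)] at h
      rw [← h, norm_mul, norm_pow, Complex.norm_two]
    rw [hnorm]
    nlinarith [pow_pos (two_pos : (0 : ℝ) < 2) (2 * k * (2 * k)!)]
  · right
    have hx1 : 1 / 2 ≤ ‖x - 1‖ := by
      have := norm_sub_norm_le (1 : ℂ) x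
      rw [norm_sub_rev] at this
      norm_num at this
      linarith
    rw [f4_solution_factorial_even_sub_one hu k, norm_mul, norm_pow, Complex.norm_two]
    nlinarith [pow_pos (two_pos : (0 : ℝ) < 2) ((2 * k + 1) * (2 * k + 1)!)]

lemma f4_solution_frequently_pow_le {u : ℕ → ℂ} (hu : ∀ n, u (n + 1) = f4 n (u n)) {γ : ℝ}
    (hγ₀ : 0 ≤ γ) (hγ : γ < 2) : ∃ᶠ n in atTop, γ ^ n ≤ 2 * (‖u n‖ + 1) := by
  obtain ⟨M, hM⟩ := eventually_atTop.1 <|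
    (tendsto_pow_atTop_nhds_zero_of_lt_one (by positivity) (by linarith : γ / 2 < 1)).eventually
      (ge_mem_nhds (by norm_num : (0 : ℝ) < 1 / 2))
  refine frequently_atTop.2 fun N => ?_
  set k := N + M + 1
  rcases f4_solution_dichotomy hu k with h | h
  · refine ⟨(2 * k)!, (by omega : N ≤ 2 * k).trans (self_le_factorial _), ?_⟩
    calc γ ^ (2 * k)! ≤ 2 ^ (2 * k)! := pow_le_pow_left₀ hγ₀ hγ.le _
      _ ≤ 2 ^ (2 * k * (2 * k)!) :=
        pow_le_pow_right₀ one_le_two (Nat.le_mul_of_pos_left _ (by omega))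
      _ ≤ 2 * ‖u (2 * k)!‖ := h
      _ ≤ 2 * (‖u (2 * k)!‖ + 1) := by linarith
  · refine ⟨(2 * k + 2)!, (by omega : N ≤ 2 * k + 2).trans (self_le_factorial _), ?_⟩
    have hγk : γ ^ (2 * k + 2) ≤ 2 ^ (2 * k + 1) := by
      have := hM (2 * k + 2) (by omega)
      rw [div_pow, div_le_iff₀ (by positivity), pow_succ (2 : ℝ)] at this
      linarith
    calc γ ^ (2 * k + 2)! = (γ ^ (2 * k + 2)) ^ (2 * k + 1)! := by
          rw [← pow_mul, ← show (2 * k + 2)! = (2 * k + 2) * (2 * k + 1)! from factorial_succ _]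
      _ ≤ (2 ^ (2 * k + 1)) ^ (2 * k + 1)! := pow_le_pow_left₀ (by positivity) hγk _
      _ = 2 ^ ((2 * k + 1) * (2 * k + 1)!) := (pow_mul _ _ _).symm
      _ ≤ 2 * ‖u (2 * k + 2)! - 1‖ := h
      _ ≤ 2 * (‖u (2 * k + 2)!‖ + 1) := by
        gcongr; simpa using norm_sub_le (u (2 * k + 2)!) 1

theorem f4_solution_not_le_mul_pow {u : ℕ → ℂ} (hu : ∀ n, u (n + 1) = f4 n (u n)) {α : ℝ}
    (hα : α < 2) : ¬ ∃ B : ℝ, ∀ n, ‖u n‖ ≤ B * α ^ n := by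
  rintro ⟨B, hB⟩
  have hB₀ : 0 ≤ B := by simpa using (norm_nonneg _).trans (hB 0)
  rcases lt_or_ge α 0 with hα₀ | hα₀
  · -- a bound `B * α` with `α < 0` at `n = 1` forces `B = 0`, but `u 1 = 0` gives `u 2 = -1`
    have hB0 : B = 0 := by nlinarith [(norm_nonneg _).trans (hB 1)]
    have h₁ : u 1 = 0 := by simpa [hB0] using hB 1
    have h₂ : u 2 = 0 := by simpa [hB0] using hB 2
    have := hu 1
    rw [h₁, h₂, f4_eq_two_mul_sub_one (k := 0) (by simp) (by simp)] at this
    norm_num at this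
  · obtain ⟨γ, hγ, hγ₂⟩ := exists_between (max_lt hα one_lt_two)
    obtain ⟨hαγ, hγ₁⟩ := max_lt_iff.1 hγ
    have hlim : Tendsto (fun n => 2 * B * (α / γ) ^ n + 2 * γ⁻¹ ^ n) atTop (𝓝 0) := by
      simpa using
        ((tendsto_pow_atTop_nhds_zero_of_lt_one (by positivity)
          ((div_lt_one (by linarith)).2 hαγ)).const_mul (2 * B)).add
        ((tendsto_pow_atTop_nhds_zero_of_lt_one (by positivity)
          (inv_lt_one_of_one_lt₀ hγ₁)).const_mul 2)
    obtain ⟨n, hgrow, hsmall⟩ :=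
      ((f4_solution_frequently_pow_le hu (by linarith) hγ₂).and_eventually
        (hlim.eventually (gt_mem_nhds one_pos))).exists
    have hγn : 0 < γ ^ n := by positivity
    have hscale : γ ^ n * (2 * B * (α / γ) ^ n + 2 * γ⁻¹ ^ n) = 2 * (B * α ^ n + 1) := by
      rw [div_pow, inv_pow]
      field_simp
    nlinarith [hB n, mul_lt_mul_of_pos_left hsmall hγn]

theorem stmt4 (u : ℕ → ℂ) (hu : ∀ n : ℕ, u (n + 1) = f4 n (u n)) :
    ¬ Subexp u ∧ ∀ α : ℝ, α < 2 → ¬ ∃ B : ℝ, ∀ n : ℕ, ‖u n‖ ≤ B * α ^ n := by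
  refine ⟨fun hsub => ?_, fun α hα => f4_solution_not_le_mul_pow hu hα⟩
  obtain ⟨B, -, hB⟩ := hsub (3 / 2) (by norm_num)
  exact f4_solution_not_le_mul_pow hu (by norm_num) ⟨B, hB⟩
end

section
/- Let $D$ be a diagonal linear automorphism of $\mathbb{C}^d$ with diagonal entries $\delta(1),\dots,\delta(d)$, and let $\mathscr{T}^k\subset\mathscr{H}^k$ be the subspace of strictly triangular $k$-homogeneous polynomial maps. Then the induced operator $\mathscr{A}_D$ on the quotient $\mathscr{H}^k/\mathscr{T}^k$ satisfies $\|\mathscr{A}_D\|_{L(\mathscr{H}^k/\mathscr{T}^k)} \le \binom{k+d-1}{d-1}\bigl(\max_{1\le h\le d}|\delta(h)|\bigr)^{k-1}\max_{1\le i\le j\le d}\frac{|\delta(j)|}{|\delta(i)|}$. -/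
/-!
Fix a strictly triangular `t` and put `q = p - t`. Deleting the strictly triangular monomials
of `𝒜_D p` leaves only monomials `z^m e_i` with `m_j ≠ 0` for some `j ≥ i`; there `t`
contributes nothing, so the coefficient is that of `𝒜_D q`, namely `δ_i⁻¹ δ^m q_{i,m}`, and
`|δ^m| ≤ |δ_j| M^{k-1}` with `M = max_h |δ_h|`. Cauchy's estimate `|q_{i,m}| ≤ ‖q‖`, obtained
by averaging `q` against characters over the grid of `N`-th roots of unity, and the fact that
there are at most `binom(k+d-1, d-1)` monomials of degree `k` then bound the sup-norm of the
remainder by the sum of its coefficients.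
-/

/-- The sup-norm `‖p‖_{∞, B₁}` of a polynomial map `ℂ^d → ℂ^d` over the closed unit
polydisk (`ℂ^d` carries the max-norm). -/
noncomputable def Hnorm (d : ℕ) (p : Fin d → MvPolynomial (Fin d) ℂ) : ℝ :=
  sSup {r : ℝ | ∃ z : Fin d → ℂ, ‖z‖ ≤ 1 ∧
    r = ‖(fun i => MvPolynomial.eval z (p i) : Fin d → ℂ)‖}

/-- A polynomial map is strictly triangular if each monomial `z^α e_i` that occurs
satisfies `α_j = 0` for all `j ≥ i`. -/
def StrictTriang {d : ℕ} (t : Fin d → MvPolynomial (Fin d) ℂ) : Prop :=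
  ∀ i : Fin d, ∀ m ∈ (t i).support, ∀ j : Fin d, i ≤ j → m j = 0

/-- The quotient norm on `𝓗^k/𝓣^k`: the infimum of `‖p - t‖` over strictly triangular
`k`-homogeneous polynomial maps `t`. -/
noncomputable def QuotNorm (d k : ℕ) (p : Fin d → MvPolynomial (Fin d) ℂ) : ℝ :=
  sInf {r : ℝ | ∃ t : Fin d → MvPolynomial (Fin d) ℂ,
    (∀ i, (t i).IsHomogeneous k) ∧ StrictTriang t ∧ r = Hnorm d (fun i => p i - t i)}

open MvPolynomial Finset

variable {d : ℕ}

section Hnorm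

theorem norm_eval_le_sum_norm_coeff (f : MvPolynomial (Fin d) ℂ) {z : Fin d → ℂ}
    (hz : ‖z‖ ≤ 1) : ‖eval z f‖ ≤ ∑ m ∈ f.support, ‖coeff m f‖ := by
  rw [eval_eq']
  refine (norm_sum_le _ _).trans (sum_le_sum fun m _ => ?_)
  rw [norm_mul]
  refine mul_le_of_le_one_right (norm_nonneg _) ?_
  rw [norm_prod]
  exact prod_le_one (fun _ _ => norm_nonneg _) fun h _ => by
    rw [norm_pow]; exact pow_le_one₀ (norm_nonneg _) ((norm_le_pi_norm z h).trans hz)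

theorem bddAbove_norm_eval (f : Fin d → MvPolynomial (Fin d) ℂ) :
    BddAbove {r : ℝ | ∃ z : Fin d → ℂ, ‖z‖ ≤ 1 ∧ r = ‖(fun i => eval z (f i) : Fin d → ℂ)‖} := by
  refine ⟨∑ i, ∑ m ∈ (f i).support, ‖coeff m (f i)‖, ?_⟩
  rintro r ⟨z, hz, rfl⟩
  refine (pi_norm_le_iff_of_nonneg (by positivity)).2 fun i => ?_
  exact (norm_eval_le_sum_norm_coeff (f i) hz).trans <|
    single_le_sum (f := fun i => ∑ m ∈ (f i).support, ‖coeff m (f i)‖)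
      (fun _ _ => by positivity) (mem_univ i)

theorem norm_eval_le_Hnorm (f : Fin d → MvPolynomial (Fin d) ℂ) {z : Fin d → ℂ}
    (hz : ‖z‖ ≤ 1) : ‖(fun i => eval z (f i) : Fin d → ℂ)‖ ≤ Hnorm d f :=
  le_csSup (bddAbove_norm_eval f) ⟨z, hz, rfl⟩

theorem Hnorm_nonneg (f : Fin d → MvPolynomial (Fin d) ℂ) : 0 ≤ Hnorm d f :=
  (norm_nonneg _).trans (norm_eval_le_Hnorm f (z := 0) (by simp))

theorem Hnorm_le_of_sum_norm_coeff_le (f : Fin d → MvPolynomial (Fin d) ℂ) {B : ℝ}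
    (hB : 0 ≤ B) (h : ∀ i, ∑ m ∈ (f i).support, ‖coeff m (f i)‖ ≤ B) : Hnorm d f ≤ B := by
  refine csSup_le ⟨_, 0, by simp, rfl⟩ ?_
  rintro r ⟨z, hz, rfl⟩
  exact (pi_norm_le_iff_of_nonneg hB).2 fun i =>
    (norm_eval_le_sum_norm_coeff (f i) hz).trans (h i)

end Hnorm

section CauchyEstimate

theorem IsPrimitiveRoot.sum_range_pow_mul_inv_pow {N : ℕ} {ζ : ℂ} (hζ : IsPrimitiveRoot ζ N)
    {a b : ℕ} (ha : a < N) (hb : b < N) :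
    ∑ s ∈ range N, (ζ ^ a * ζ⁻¹ ^ b) ^ s = if a = b then (N : ℂ) else 0 := by
  have hN : N ≠ 0 := by omega
  have hζ0 : ζ ≠ 0 := hζ.ne_zero hN
  split_ifs with hab
  · subst hab
    simp [inv_pow, mul_inv_cancel₀ (pow_ne_zero _ hζ0)]
  · have hx1 : ζ ^ a * ζ⁻¹ ^ b ≠ 1 := by
      rw [inv_pow, ne_eq, mul_inv_eq_one₀ (pow_ne_zero _ hζ0)]
      exact fun h => hab (hζ.pow_inj ha hb h)
    have hxN : (ζ ^ a * ζ⁻¹ ^ b) ^ N = 1 := by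
      rw [mul_pow, ← pow_mul, ← pow_mul, mul_comm a, mul_comm b, pow_mul, pow_mul, inv_pow,
        hζ.pow_eq_one]
      simp
    rw [geom_sum_eq hx1, hxN, sub_self, zero_div]

theorem sum_prod_rootOfUnity_pow {N : ℕ} {ζ : ℂ} (hζ : IsPrimitiveRoot ζ N)
    {m α : Fin d →₀ ℕ} (hm : ∀ h, m h < N) (hα : ∀ h, α h < N) :
    ∑ t : Fin d → Fin N, ∏ h, (ζ ^ m h * ζ⁻¹ ^ α h) ^ (t h : ℕ) =
      if m = α then (N : ℂ) ^ d else 0 := by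
  classical
  rw [← Fintype.prod_sum (fun h (s : Fin N) => (ζ ^ m h * ζ⁻¹ ^ α h) ^ (s : ℕ))]
  have hsum (h : Fin d) : ∑ s : Fin N, (ζ ^ m h * ζ⁻¹ ^ α h) ^ (s : ℕ) =
      if m h = α h then (N : ℂ) else 0 :=
    (Fin.sum_univ_eq_sum_range (fun s => (ζ ^ m h * ζ⁻¹ ^ α h) ^ s) N).trans
      (hζ.sum_range_pow_mul_inv_pow (hm h) (hα h))
  simp_rw [hsum, prod_ite_zero, prod_const, card_univ, Fintype.card_fin, mem_univ, true_implies,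
    ← Finsupp.ext_iff]

theorem coeff_eq_sum_eval_rootsOfUnity {N : ℕ} {ζ : ℂ} (hζ : IsPrimitiveRoot ζ N)
    (f : MvPolynomial (Fin d) ℂ) (hf : ∀ m ∈ f.support, ∀ h, m h < N)
    {α : Fin d →₀ ℕ} (hα : ∀ h, α h < N) :
    (N : ℂ) ^ d * coeff α f =
      ∑ t : Fin d → Fin N, (∏ h, ζ⁻¹ ^ (α h * t h)) * eval (fun h => ζ ^ (t h : ℕ)) f := by
  have hterm : ∀ t : Fin d → Fin N, (∏ h, ζ⁻¹ ^ (α h * t h)) * eval (fun h => ζ ^ (t h : ℕ)) f =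
      ∑ m ∈ f.support, coeff m f * ∏ h, (ζ ^ m h * ζ⁻¹ ^ α h) ^ (t h : ℕ) := by
    intro t
    rw [eval_eq', mul_sum]
    refine sum_congr rfl fun m _ => ?_
    rw [mul_left_comm, ← prod_mul_distrib]
    congr 1
    refine prod_congr rfl fun h _ => ?_
    ring
  simp_rw [hterm]
  rw [sum_comm]
  simp_rw [← mul_sum]
  rw [sum_congr rfl fun m hm => by rw [sum_prod_rootOfUnity_pow hζ (hf m hm) hα]]
  simp_rw [mul_ite, mul_zero]
  rw [sum_ite_eq']
  split_ifs with hαf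
  · exact mul_comm _ _
  · rw [notMem_support_iff.1 hαf, mul_zero]

theorem norm_coeff_le_of_norm_eval_le (f : MvPolynomial (Fin d) ℂ) (α : Fin d →₀ ℕ) {B : ℝ}
    (hB : ∀ z : Fin d → ℂ, ‖z‖ ≤ 1 → ‖eval z f‖ ≤ B) : ‖coeff α f‖ ≤ B := by
  by_cases hα : α ∈ f.support
  swap
  · rw [notMem_support_iff.1 hα, norm_zero]
    exact (norm_nonneg _).trans (hB 0 (by simp))
  set N := f.totalDegree + 1
  have hN : N ≠ 0 := f.totalDegree.succ_ne_zero
  have hexp : ∀ m ∈ f.support, ∀ h, m h < N := fun m hm h =>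
    Nat.lt_succ_of_le ((Finsupp.le_degree h m).trans (le_totalDegree hm))
  set ζ := Complex.exp (2 * Real.pi * Complex.I / N)
  have hζ : IsPrimitiveRoot ζ N := Complex.isPrimitiveRoot_exp N hN
  have hζ1 : ‖ζ‖ = 1 := hζ.norm'_eq_one hN
  have hterm (t : Fin d → Fin N) :
      ‖(∏ h, ζ⁻¹ ^ (α h * t h)) * eval (fun h => ζ ^ (t h : ℕ)) f‖ ≤ B := by
    rw [norm_mul, norm_prod]
    simp only [norm_pow, norm_inv, hζ1, inv_one, one_pow, prod_const_one, one_mul]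
    exact hB _ ((pi_norm_le_iff_of_nonneg zero_le_one).2 fun h => by simp [hζ1])
  have hbound : (N : ℝ) ^ d * ‖coeff α f‖ ≤ (N : ℝ) ^ d * B := by
    calc (N : ℝ) ^ d * ‖coeff α f‖ = ‖(N : ℂ) ^ d * coeff α f‖ := by simp
      _ ≤ ∑ t : Fin d → Fin N, B := by
        rw [coeff_eq_sum_eval_rootsOfUnity hζ f hexp (hexp α hα)]
        exact (norm_sum_le _ _).trans (sum_le_sum fun t _ => hterm t)
      _ = (N : ℝ) ^ d * B := by simp
  exact le_of_mul_le_mul_left hbound (by positivity)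

theorem norm_coeff_le_Hnorm (f : Fin d → MvPolynomial (Fin d) ℂ) (i : Fin d)
    (α : Fin d →₀ ℕ) : ‖coeff α (f i)‖ ≤ Hnorm d f :=
  norm_coeff_le_of_norm_eval_le (f i) α fun z hz =>
    (norm_le_pi_norm (fun j => eval z (f j)) i).trans (norm_eval_le_Hnorm f hz)

end CauchyEstimate

theorem MvPolynomial.IsHomogeneous.degree_eq_of_mem_support {σ R : Type*} [CommSemiring R]
    {f : MvPolynomial σ R} {k : ℕ} (hf : f.IsHomogeneous k) {m : σ →₀ ℕ} (hm : m ∈ f.support) :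
    m.degree = k :=
  (hf.degree_eq_sum_deg_support hm).symm

theorem MvPolynomial.IsHomogeneous.card_support_le_choose {R : Type*} [CommSemiring R]
    {f : MvPolynomial (Fin d) R} {k : ℕ} (hf : f.IsHomogeneous k) (hd : 0 < d) :
    #f.support ≤ (k + d - 1).choose (d - 1) := by
  classical
  have hsub : f.support ⊆ univ.finsuppAntidiag k := fun m hm =>
    mem_finsuppAntidiag.2
      ⟨by rw [← Finsupp.degree_eq_sum, hf.degree_eq_of_mem_support hm], subset_univ _⟩
  obtain ⟨d, rfl⟩ := Nat.exists_eq_add_one_of_ne_zero hd.ne'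
  calc #f.support ≤ #(univ.finsuppAntidiag k) := card_le_card hsub
    _ = (k + (d + 1) - 1).choose (d + 1 - 1) := by
      rw [card_finsuppAntidiag_nat_eq_choose, card_univ, Fintype.card_fin, Nat.add_sub_cancel,
        show d + 1 + k - 1 = d + k by omega, show k + (d + 1) - 1 = d + k by omega,
        Nat.choose_symm_add]

section ScaleVariables

variable {σ R : Type*} [Fintype σ] [CommSemiring R]

theorem bind₁_smul_X_monomial (c : σ → R) (m : σ →₀ ℕ) (r : R) :
    bind₁ (fun j => c j • (X j : MvPolynomial σ R)) (monomial m r) =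
      monomial m ((∏ j, c j ^ m j) * r) := by
  rw [bind₁_monomial]
  simp_rw [smul_eq_C_mul, mul_pow, prod_mul_distrib, ← map_pow, ← map_prod,
    prod_X_pow_eq_monomial, C_mul_monomial, mul_one, ← Finsupp.prod.eq_1, Finsupp.prod_pow,
    mul_comm r]

theorem coeff_bind₁_smul_X (c : σ → R) (f : MvPolynomial σ R) (α : σ →₀ ℕ) :
    coeff α (bind₁ (fun j => c j • (X j : MvPolynomial σ R)) f) =
      (∏ j, c j ^ α j) * coeff α f := by
  classical
  induction f using MvPolynomial.induction_on' with
  | monomial m r =>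
    rw [bind₁_smul_X_monomial, coeff_monomial, coeff_monomial]
    split_ifs with h
    · rw [h]
    · rw [mul_zero]
  | add f g hf hg => rw [map_add, coeff_add, coeff_add, hf, hg, mul_add]

theorem prod_pow_le_mul_pow_degree_sub_one {a : σ → ℝ} {M : ℝ}
    (ha : ∀ h, 0 ≤ a h) (haM : ∀ h, a h ≤ M) {m : σ →₀ ℕ} {j : σ} (hj : m j ≠ 0) :
    ∏ h, a h ^ m h ≤ a j * M ^ (m.degree - 1) := by
  classical
  obtain ⟨m', rfl⟩ : ∃ m', m = m' + Finsupp.single j 1 :=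
    ⟨m - Finsupp.single j 1, (tsub_add_cancel_of_le (Finsupp.single_le_iff.2 (by omega))).symm⟩
  have hsingle : ∏ h, a h ^ (Finsupp.single j 1 : σ →₀ ℕ) h = a j := by
    rw [← Finsupp.prod_pow, Finsupp.prod_single_index (by exact pow_zero (a j)), pow_one]
  rw [map_add, Finsupp.degree_single, Nat.add_sub_cancel]
  simp_rw [Finsupp.add_apply, pow_add, prod_mul_distrib, hsingle, mul_comm (a j)]
  refine mul_le_mul_of_nonneg_right ?_ (ha j)
  calc ∏ h, a h ^ m' h ≤ ∏ h, M ^ m' h :=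
        prod_le_prod (fun h _ => pow_nonneg (ha h) _) fun h _ => pow_le_pow_left₀ (ha h) (haM h) _
    _ = M ^ m'.degree := by rw [prod_pow_eq_pow_sum, Finsupp.degree_eq_sum]

end ScaleVariables

section DiagonalConjugation

/-- `𝒜_D p = D⁻¹ ∘ p ∘ D` for the diagonal map `D = diag δ`. -/
noncomputable def diagConj (δ : Fin d → ℂ) (p : Fin d → MvPolynomial (Fin d) ℂ) :
    Fin d → MvPolynomial (Fin d) ℂ :=
  fun i => (δ i)⁻¹ • bind₁ (fun j => δ j • (X j : MvPolynomial (Fin d) ℂ)) (p i)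

theorem coeff_diagConj (δ : Fin d → ℂ) (p : Fin d → MvPolynomial (Fin d) ℂ) (i : Fin d)
    (m : Fin d →₀ ℕ) :
    coeff m (diagConj δ p i) = (δ i)⁻¹ * (∏ h, δ h ^ m h) * coeff m (p i) := by
  rw [diagConj, coeff_smul, coeff_bind₁_smul_X, smul_eq_mul, mul_assoc]

theorem coeff_diagConj_eq_zero {δ : Fin d → ℂ} {p : Fin d → MvPolynomial (Fin d) ℂ} {i : Fin d}
    {m : Fin d →₀ ℕ} (hm : coeff m (p i) = 0) : coeff m (diagConj δ p i) = 0 := by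
  rw [coeff_diagConj, hm, mul_zero]

theorem isHomogeneous_diagConj (δ : Fin d → ℂ) {p : Fin d → MvPolynomial (Fin d) ℂ} {k : ℕ}
    (hp : ∀ i, (p i).IsHomogeneous k) (i : Fin d) : (diagConj δ p i).IsHomogeneous k :=
  fun _ hm => hp i (mt coeff_diagConj_eq_zero hm)

theorem norm_inv_mul_prod_pow_le {δ : Fin d → ℂ} {M R : ℝ} (hM : ∀ h, ‖δ h‖ ≤ M)
    (hR : ∀ i j : Fin d, i ≤ j → ‖δ j‖ / ‖δ i‖ ≤ R) {i j : Fin d} (hij : i ≤ j)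
    {m : Fin d →₀ ℕ} (hj : m j ≠ 0) :
    ‖(δ i)⁻¹ * ∏ h, δ h ^ m h‖ ≤ M ^ (m.degree - 1) * R := by
  have hM0 : 0 ≤ M := (norm_nonneg _).trans (hM j)
  rw [norm_mul, norm_inv, norm_prod]
  simp_rw [norm_pow]
  calc ‖δ i‖⁻¹ * ∏ h, ‖δ h‖ ^ m h ≤ ‖δ i‖⁻¹ * (‖δ j‖ * M ^ (m.degree - 1)) :=
        mul_le_mul_of_nonneg_left
          (prod_pow_le_mul_pow_degree_sub_one (fun _ => norm_nonneg _) hM hj) (by positivity)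
    _ = ‖δ j‖ / ‖δ i‖ * M ^ (m.degree - 1) := by ring
    _ ≤ R * M ^ (m.degree - 1) := mul_le_mul_of_nonneg_right (hR i j hij) (by positivity)
    _ = M ^ (m.degree - 1) * R := mul_comm _ _

end DiagonalConjugation

section TriangularPart

noncomputable def triangPart (f : Fin d → MvPolynomial (Fin d) ℂ) :
    Fin d → MvPolynomial (Fin d) ℂ :=
  fun i => ∑ m ∈ (f i).support with ∀ j, i ≤ j → m j = 0, monomial m (coeff m (f i))

theorem coeff_triangPart (f : Fin d → MvPolynomial (Fin d) ℂ) (i : Fin d) (m : Fin d →₀ ℕ) :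
    coeff m (triangPart f i) = if ∀ j, i ≤ j → m j = 0 then coeff m (f i) else 0 := by
  rw [triangPart, coeff_sum]
  simp_rw [coeff_monomial]
  rw [sum_ite_eq']
  by_cases hm : coeff m (f i) = 0 <;> simp [hm]

theorem strictTriang_triangPart (f : Fin d → MvPolynomial (Fin d) ℂ) :
    StrictTriang (triangPart f) := fun i m hm => by
  rw [mem_support_iff, coeff_triangPart] at hm
  exact (ite_ne_right_iff.1 hm).1

theorem isHomogeneous_triangPart {f : Fin d → MvPolynomial (Fin d) ℂ} {k : ℕ}
    (hf : ∀ i, (f i).IsHomogeneous k) (i : Fin d) : (triangPart f i).IsHomogeneous k :=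
  fun m hm => hf i (by rw [coeff_triangPart] at hm; exact (ite_ne_right_iff.1 hm).2)

theorem coeff_sub_triangPart_of_not {f : Fin d → MvPolynomial (Fin d) ℂ} {i : Fin d}
    {m : Fin d →₀ ℕ} (hm : ¬∀ j, i ≤ j → m j = 0) :
    coeff m (f i - triangPart f i) = coeff m (f i) := by
  rw [coeff_sub, coeff_triangPart, if_neg hm, sub_zero]

end TriangularPart

section QuotNorm

theorem QuotNorm_le_Hnorm_sub {k : ℕ} (p : Fin d → MvPolynomial (Fin d) ℂ)
    {t : Fin d → MvPolynomial (Fin d) ℂ} (ht : ∀ i, (t i).IsHomogeneous k)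
    (hT : StrictTriang t) : QuotNorm d k p ≤ Hnorm d (fun i => p i - t i) :=
  csInf_le ⟨0, by rintro _ ⟨t, -, -, rfl⟩; exact Hnorm_nonneg _⟩ ⟨t, ht, hT, rfl⟩

theorem QuotNorm_le_mul_QuotNorm {k : ℕ} {C : ℝ} (hC : 0 ≤ C)
    {f p : Fin d → MvPolynomial (Fin d) ℂ}
    (h : ∀ t : Fin d → MvPolynomial (Fin d) ℂ, (∀ i, (t i).IsHomogeneous k) → StrictTriang t →
      QuotNorm d k f ≤ C * Hnorm d (fun i => p i - t i)) :
    QuotNorm d k f ≤ C * QuotNorm d k p := by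
  have hzero : StrictTriang (0 : Fin d → MvPolynomial (Fin d) ℂ) := fun i m hm => by simp at hm
  rw [QuotNorm.eq_1 d k p, ← smul_eq_mul, ← Real.sInf_smul_of_nonneg hC]
  refine le_csInf ⟨_, Set.smul_mem_smul_set ⟨0, fun _ => isHomogeneous_zero _ _ _, hzero, rfl⟩⟩ ?_
  rintro _ ⟨_, ⟨t, ht, hT, rfl⟩, rfl⟩
  exact h t ht hT

end QuotNorm

theorem Hnorm_sub_triangPart_diagConj_le {δ : Fin d → ℂ} {M R : ℝ} (hM0 : 0 ≤ M) (hR0 : 0 ≤ R)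
    (hM : ∀ h, ‖δ h‖ ≤ M) (hR : ∀ i j : Fin d, i ≤ j → ‖δ j‖ / ‖δ i‖ ≤ R) {k : ℕ}
    {p t : Fin d → MvPolynomial (Fin d) ℂ} (hp : ∀ i, (p i).IsHomogeneous k)
    (hT : StrictTriang t) :
    Hnorm d (fun i => diagConj δ p i - triangPart (diagConj δ p) i) ≤
      ((k + d - 1).choose (d - 1) : ℝ) * M ^ ((k : ℤ) - 1) * R * Hnorm d (fun i => p i - t i) := by
  have hH := Hnorm_nonneg (fun i => p i - t i)
  refine Hnorm_le_of_sum_norm_coeff_le _ (by positivity) fun i => ?_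
  set g := diagConj δ p i - triangPart (diagConj δ p) i
  have hg : g.IsHomogeneous k := (isHomogeneous_diagConj δ hp i).sub
    (isHomogeneous_triangPart (isHomogeneous_diagConj δ hp) i)
  have hcoeff : ∀ m ∈ g.support,
      ‖coeff m g‖ ≤ M ^ ((k : ℤ) - 1) * R * Hnorm d (fun i => p i - t i) := by
    intro m hm
    have hoff : ¬∀ j, i ≤ j → m j = 0 := fun hlow => mem_support_iff.1 hm <| by
      rw [coeff_sub, coeff_triangPart, if_pos hlow, sub_self]
    obtain ⟨j, hij, hmj⟩ : ∃ j, i ≤ j ∧ m j ≠ 0 := by push Not at hoff; exact hoff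
    have hk : (k : ℤ) - 1 = ((m.degree - 1 : ℕ) : ℤ) := by
      have := Finsupp.le_degree j m
      rw [hg.degree_eq_of_mem_support hm] at this ⊢
      omega
    have hpt : coeff m (p i) = coeff m (p i - t i) := by
      rw [coeff_sub, not_not.1 fun h => hmj (hT i m (mem_support_iff.2 h) j hij), sub_zero]
    rw [coeff_sub_triangPart_of_not hoff, coeff_diagConj, hpt, norm_mul, hk, zpow_natCast]
    exact mul_le_mul (norm_inv_mul_prod_pow_le hM hR hij hmj)
      (norm_coeff_le_Hnorm (fun i => p i - t i) i m) (norm_nonneg _) (by positivity)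
  have hcard : (#g.support : ℝ) ≤ (k + d - 1).choose (d - 1) := by
    exact_mod_cast hg.card_support_le_choose i.pos
  calc ∑ m ∈ g.support, ‖coeff m g‖
      ≤ #g.support • (M ^ ((k : ℤ) - 1) * R * Hnorm d (fun i => p i - t i)) :=
        sum_le_card_nsmul _ _ _ hcoeff
    _ ≤ (k + d - 1).choose (d - 1) * (M ^ ((k : ℤ) - 1) * R * Hnorm d (fun i => p i - t i)) := by
      rw [nsmul_eq_mul]
      exact mul_le_mul_of_nonneg_right hcard (by positivity)
    _ = _ := by ring

theorem stmt10_general (d k : ℕ) (δ : Fin d → ℂ)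
    (p : Fin d → MvPolynomial (Fin d) ℂ) (hp : ∀ i, (p i).IsHomogeneous k) :
    QuotNorm d k (fun i => (δ i)⁻¹ •
        MvPolynomial.bind₁ (fun j => δ j • (MvPolynomial.X j : MvPolynomial (Fin d) ℂ)) (p i))
      ≤ ((k + d - 1).choose (d - 1) : ℝ) * (⨆ h : Fin d, ‖δ h‖) ^ ((k : ℤ) - 1) *
        sSup {r : ℝ | ∃ i j : Fin d, i ≤ j ∧ r = ‖δ j‖ / ‖δ i‖} * QuotNorm d k p := by
  set M := ⨆ h : Fin d, ‖δ h‖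
  set R := sSup {r : ℝ | ∃ i j : Fin d, i ≤ j ∧ r = ‖δ j‖ / ‖δ i‖}
  have hM0 : 0 ≤ M := Real.iSup_nonneg fun _ => norm_nonneg _
  have hR0 : 0 ≤ R := Real.sSup_nonneg <| by rintro _ ⟨i, j, -, rfl⟩; positivity
  have hM : ∀ h, ‖δ h‖ ≤ M := le_ciSup (Finite.bddAbove_range _)
  have hR : ∀ i j : Fin d, i ≤ j → ‖δ j‖ / ‖δ i‖ ≤ R := fun i j hij =>
    le_csSup ((Set.finite_range fun q : Fin d × Fin d => ‖δ q.2‖ / ‖δ q.1‖).subset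
      (by rintro _ ⟨i, j, -, rfl⟩; exact ⟨(i, j), rfl⟩)).bddAbove ⟨i, j, hij, rfl⟩
  have hA := isHomogeneous_diagConj δ hp
  refine QuotNorm_le_mul_QuotNorm (by positivity) fun t _ hT => ?_
  calc QuotNorm d k (diagConj δ p)
      ≤ Hnorm d (fun i => diagConj δ p i - triangPart (diagConj δ p) i) :=
        QuotNorm_le_Hnorm_sub _ (isHomogeneous_triangPart hA) (strictTriang_triangPart _)
    _ ≤ _ := Hnorm_sub_triangPart_diagConj_le hM0 hR0 hM hR hp hT

theorem stmt10 (d k : ℕ) (hd : 0 < d) (δ : Fin d → ℂ) (hδ : ∀ j, δ j ≠ 0)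
    (p : Fin d → MvPolynomial (Fin d) ℂ) (hp : ∀ i, (p i).IsHomogeneous k) :
    QuotNorm d k (fun i => (δ i)⁻¹ •
        MvPolynomial.bind₁ (fun j => δ j • (MvPolynomial.X j : MvPolynomial (Fin d) ℂ)) (p i))
      ≤ ((k + d - 1).choose (d - 1) : ℝ) * (⨆ h : Fin d, ‖δ h‖) ^ ((k : ℤ) - 1) *
        sSup {r : ℝ | ∃ i j : Fin d, i ≤ j ∧ r = ‖δ j‖ / ‖δ i‖} * QuotNorm d k p :=
  stmt10_general d k δ p hp
end
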